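/- arXiv:2101.02864 — 7 statements merged into one kernel-verified Lean document; each statement's English description precedes it below -/
import Mathlib

section
/- Define 2×2 matrices A(z,x) = [[−v, z² + yz + y² + x/2],[4(z−y), v]] and B(z,x) = [[0, z/2 + y],[2, 0]], where y and v are differentiable functions of x. Then the zero-curvature equation ∂A/∂x − ∂B/∂z + AB − BA = 0 holds identically in z if and only if y' = v and v' = 6y² + x (so that y satisfies the first Painlevé equation y'' = 6y² + x). -/
/-!
The curvature `A_x - B_z + [A, B]` equals
`[[6y² + x - v', (y' - v)(z + 2y)], [4(v - y'), v' - 6y² - x]]`, whose only dependence on `z`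
is through the factor `y' - v`. Hence it vanishes for one `z` iff it vanishes for all `z`
iff `y' = v` and `v' = 6y² + x`.
-/

open Matrix

noncomputable def laxCurvature {n : Type*} [Fintype n] (A B : ℂ → ℂ → Matrix n n ℂ) (z x : ℂ) :
    Matrix n n ℂ :=
  (of fun i j => deriv (fun t => A z t i j) x) - (of fun i j => deriv (fun t => B t x i j) z)
    + A z x * B z x - B z x * A z x

section PainleveOne
variable (y v : ℂ → ℂ)

noncomputable def painleveA (z x : ℂ) : Matrix (Fin 2) (Fin 2) ℂ :=
  !![-(v x), z^2 + y x * z + (y x)^2 + x/2; 4*(z - y x), v x]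

noncomputable def painleveB (z x : ℂ) : Matrix (Fin 2) (Fin 2) ℂ :=
  !![0, z/2 + y x; 2, 0]

variable {y}

lemma hasDerivAt_painleveA_topRight {x : ℂ} (hy : DifferentiableAt ℂ y x) (z : ℂ) :
    HasDerivAt (fun t => z^2 + y t * z + (y t)^2 + t/2) (deriv y x * (z + 2 * y x) + 1/2) x :=
  ((((hasDerivAt_const x (z^2)).add (hy.hasDerivAt.mul_const z)).add (hy.hasDerivAt.pow 2)).add
    ((hasDerivAt_id x).div_const 2)).congr_deriv (by norm_num; ring)

lemma painleveA_deriv {x : ℂ} (hy : DifferentiableAt ℂ y x) (z : ℂ) :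
    (of fun i j => deriv (fun t => painleveA y v z t i j) x)
      = !![-(deriv v x), deriv y x * (z + 2 * y x) + 1/2; -(4 * deriv y x), deriv v x] := by
  ext i j
  fin_cases i <;> fin_cases j <;> simp [painleveA, (hasDerivAt_painleveA_topRight hy z).deriv]

lemma painleveB_deriv (z x : ℂ) :
    (of fun i j => deriv (fun t => painleveB y t x i j) z) = !![0, 1/2; 0, 0] := by
  ext i j
  fin_cases i <;> fin_cases j <;> simp [painleveB]

lemma painleveA_mul_painleveB_sub (z x : ℂ) :
    painleveA y v z x * painleveB y z x - painleveB y z x * painleveA y v z x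
      = !![6 * y x ^ 2 + x, -(v x * (z + 2 * y x)); 4 * v x, -(6 * y x ^ 2 + x)] := by
  ext i j
  fin_cases i <;> fin_cases j <;> simp [painleveA, painleveB] <;> ring

lemma laxCurvature_painleve {x : ℂ} (hy : DifferentiableAt ℂ y x) (z : ℂ) :
    laxCurvature (painleveA y v) (painleveB y) z x
      = !![6 * y x ^ 2 + x - deriv v x, (deriv y x - v x) * (z + 2 * y x);
           4 * (v x - deriv y x), deriv v x - (6 * y x ^ 2 + x)] := by
  rw [laxCurvature, add_sub_assoc, painleveA_deriv v hy, painleveB_deriv,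
    painleveA_mul_painleveB_sub]
  ext i j
  fin_cases i <;> fin_cases j <;> simp <;> ring

lemma laxCurvature_painleve_eq_zero_iff {x : ℂ} (hy : DifferentiableAt ℂ y x) (z : ℂ) :
    laxCurvature (painleveA y v) (painleveB y) z x = 0
      ↔ deriv y x = v x ∧ deriv v x = 6 * y x ^ 2 + x := by
  rw [laxCurvature_painleve v hy, ← Matrix.ext_iff]
  simp only [Fin.forall_fin_two, of_apply, cons_val', cons_val_zero, cons_val_one, empty_val',
    cons_val_fin_one, Matrix.zero_apply]
  constructor
  · rintro ⟨⟨hv', -⟩, ⟨hy', -⟩⟩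
    exact ⟨by linear_combination -hy' / 4, by linear_combination -hv'⟩
  · rintro ⟨hy', hv'⟩
    simp [hy', hv']

end PainleveOne

theorem PI_zero_curvature_general
    (y v : ℂ → ℂ) (hy : Differentiable ℂ y)
    (A B : ℂ → ℂ → Matrix (Fin 2) (Fin 2) ℂ)
    (hA : ∀ z x, A z x = !![-(v x), z^2 + y x * z + (y x)^2 + x/2;
                            4*(z - y x), v x])
    (hB : ∀ z x, B z x = !![0, z/2 + y x; 2, 0]) :
    ((∀ z x, (Matrix.of fun i j => deriv (fun t => A z t i j) x)
        - (Matrix.of fun i j => deriv (fun t => B t x i j) z)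
        + A z x * B z x - B z x * A z x = 0)
      ↔ (∀ x, deriv y x = v x ∧ deriv v x = 6 * (y x)^2 + x))
    ∧ ((∀ x, deriv y x = v x ∧ deriv v x = 6 * (y x)^2 + x)
      → ∀ x, deriv (deriv y) x = 6 * (y x)^2 + x) := by
  obtain rfl : A = painleveA y v := funext₂ hA
  obtain rfl : B = painleveB y := funext₂ hB
  have hcurv (x : ℂ) : (∀ z, laxCurvature (painleveA y v) (painleveB y) z x = 0)
      ↔ deriv y x = v x ∧ deriv v x = 6 * y x ^ 2 + x :=
    ⟨fun h => (laxCurvature_painleve_eq_zero_iff v (hy x) 0).1 (h 0),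
      fun h z => (laxCurvature_painleve_eq_zero_iff v (hy x) z).2 h⟩
  refine ⟨forall_comm.trans (forall_congr' hcurv), fun h x => ?_⟩
  rw [funext fun t => (h t).1]
  exact (h x).2

/-- The zero-curvature equation for the Painlevé I Lax pair holds identically in the
spectral variable `z` iff `y' = v` and `v' = 6y² + x`; in particular these equations
imply the Painlevé I equation `y'' = 6y² + x`. -/
theorem PI_zero_curvature
    (y v : ℂ → ℂ) (hy : Differentiable ℂ y) (hv : Differentiable ℂ v)
    (A B : ℂ → ℂ → Matrix (Fin 2) (Fin 2) ℂ)
    (hA : ∀ z x, A z x = !![-(v x), z^2 + y x * z + (y x)^2 + x/2;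
                            4*(z - y x), v x])
    (hB : ∀ z x, B z x = !![0, z/2 + y x; 2, 0]) :
    ((∀ z x, (Matrix.of fun i j => deriv (fun t => A z t i j) x)
        - (Matrix.of fun i j => deriv (fun t => B t x i j) z)
        + A z x * B z x - B z x * A z x = 0)
      ↔ (∀ x, deriv y x = v x ∧ deriv v x = 6 * (y x)^2 + x))
    ∧ ((∀ x, deriv y x = v x ∧ deriv v x = 6 * (y x)^2 + x)
      → ∀ x, deriv (deriv y) x = 6 * (y x)^2 + x) :=
  PI_zero_curvature_general y v hy A B hA hB
end

section
/- If five 2×2 matrices S₋₁, S₀, S₁, S₂, S₃, with S₂ₖ₋₁ = [[1,0],[s₂ₖ₋₁,1]] lower triangular and S₂ₖ = [[1,s₂ₖ],[0,1]] upper triangular, satisfy the cyclic condition S₋₁S₀S₁S₂S₃ = iσ₁ (where σ₁ = [[0,1],[1,0]]), then the Stokes multipliers, extended 5-periodically by s_{k+5} = s_k, satisfy s_k = i(1 + s_{k+2}s_{k+3}) for all integers k. -/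
open Matrix Complex

/-!
Conjugation by `σ₁` exchanges lower and upper unipotent matrices and fixes `ωσ₁`, so the
cyclic relation `L a U b L c U d L e = ωσ₁` can be rotated to `L b U c L d U e L a = ωσ₁`.
By periodicity it therefore holds for every window `s_k, …, s_{k+4}`, and a single scalar
consequence of it, `a = ω(1 + cd)`, is the claimed relation.
-/

namespace Stokes

variable {R : Type*} [CommRing R]

def lower (x : R) : Matrix (Fin 2) (Fin 2) R := !![1, 0; x, 1]

def upper (x : R) : Matrix (Fin 2) (Fin 2) R := !![1, x; 0, 1]

def sigmaOne : Matrix (Fin 2) (Fin 2) R := !![0, 1; 1, 0]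

def cyclicProduct (a b c d e : R) : Matrix (Fin 2) (Fin 2) R :=
  lower a * upper b * lower c * upper d * lower e

theorem sigmaOne_mul_sigmaOne : (sigmaOne * sigmaOne : Matrix (Fin 2) (Fin 2) R) = 1 := by
  ext i j; fin_cases i <;> fin_cases j <;> simp [sigmaOne]

theorem sigmaOne_mul_lower (x : R) : sigmaOne * lower x = upper x * sigmaOne := by
  ext i j; fin_cases i <;> fin_cases j <;> simp [sigmaOne, lower, upper]

theorem sigmaOne_mul_upper (x : R) : sigmaOne * upper x = lower x * sigmaOne := by
  ext i j; fin_cases i <;> fin_cases j <;> simp [sigmaOne, lower, upper]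

theorem sigmaOne_mul_lower_assoc (x : R) (M : Matrix (Fin 2) (Fin 2) R) :
    sigmaOne * (lower x * M) = upper x * (sigmaOne * M) := by
  rw [← mul_assoc, sigmaOne_mul_lower, mul_assoc]

theorem sigmaOne_mul_upper_assoc (x : R) (M : Matrix (Fin 2) (Fin 2) R) :
    sigmaOne * (upper x * M) = lower x * (sigmaOne * M) := by
  rw [← mul_assoc, sigmaOne_mul_upper, mul_assoc]

theorem upper_neg_mul_upper (x : R) : upper (-x) * upper x = 1 := by
  ext i j; fin_cases i <;> fin_cases j <;> simp [upper]

theorem cyclicProduct_rotate {a b c d e ω : R} (h : cyclicProduct a b c d e = ω • sigmaOne) :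
    cyclicProduct b c d e a = ω • sigmaOne := by
  have hconj : upper a * (lower b * upper c * lower d * upper e) = ω • sigmaOne :=
    calc upper a * (lower b * upper c * lower d * upper e)
        = sigmaOne * cyclicProduct a b c d e * sigmaOne := by
          simp only [cyclicProduct, mul_assoc, sigmaOne_mul_lower_assoc,
            sigmaOne_mul_upper_assoc, sigmaOne_mul_sigmaOne, mul_one]
      _ = ω • sigmaOne := by
          rw [h, mul_smul_comm, smul_mul_assoc, sigmaOne_mul_sigmaOne, one_mul]
  calc cyclicProduct b c d e a
      = upper (-a) * (upper a * (lower b * upper c * lower d * upper e)) * lower a := by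
        rw [← mul_assoc, upper_neg_mul_upper, one_mul]; rfl
    _ = ω • sigmaOne := by
        rw [hconj, mul_smul_comm, smul_mul_assoc, mul_assoc, sigmaOne_mul_lower, ← mul_assoc,
          upper_neg_mul_upper, one_mul]

theorem cyclicProduct_rotate_iff {a b c d e ω : R} :
    cyclicProduct a b c d e = ω • sigmaOne ↔ cyclicProduct b c d e a = ω • sigmaOne :=
  ⟨cyclicProduct_rotate, fun h => cyclicProduct_rotate <| cyclicProduct_rotate <|
    cyclicProduct_rotate <| cyclicProduct_rotate h⟩

theorem eq_of_cyclicProduct_eq {a b c d e ω : R} (h : cyclicProduct a b c d e = ω • sigmaOne) :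
    a = ω * (1 + c * d) := by
  have h10 : a + (a * b + 1) * c + ((a + (a * b + 1) * c) * d + (a * b + 1)) * e = ω := by
    simpa [cyclicProduct, lower, upper, sigmaOne, Matrix.mul_apply, Fin.sum_univ_two]
      using congrFun (congrFun h 1) 0
  have h11 : (a + (a * b + 1) * c) * d + (a * b + 1) = 0 := by
    simpa [cyclicProduct, lower, upper, sigmaOne, Matrix.mul_apply, Fin.sum_univ_two]
      using congrFun (congrFun h 1) 1
  linear_combination (1 + c * d) * h10 - (c + e + c * d * e) * h11

theorem cyclicProduct_periodic {s : ℤ → R} (hper : ∀ k, s (k + 5) = s k) {ω : R} (k₀ : ℤ)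
    (h₀ : cyclicProduct (s k₀) (s (k₀ + 1)) (s (k₀ + 2)) (s (k₀ + 3)) (s (k₀ + 4))
      = ω • sigmaOne)
    (k : ℤ) :
    cyclicProduct (s k) (s (k + 1)) (s (k + 2)) (s (k + 3)) (s (k + 4)) = ω • sigmaOne := by
  have hstep : ∀ k,
      cyclicProduct (s k) (s (k + 1)) (s (k + 2)) (s (k + 3)) (s (k + 4)) = ω • sigmaOne
      ↔ cyclicProduct (s (k + 1)) (s (k + 1 + 1)) (s (k + 1 + 2)) (s (k + 1 + 3))
        (s (k + 1 + 4)) = ω • sigmaOne := fun k => by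
    rw [cyclicProduct_rotate_iff, ← hper k]
    ring_nf
  induction k using Int.inductionOn' with
  | b => exact k₀
  | zero => exact h₀
  | succ k _ ih => exact (hstep k).mp ih
  | pred k _ ih => exact (hstep (k - 1)).mpr (by simpa using ih)

end Stokes

/-- The cyclic condition `S₋₁S₀S₁S₂S₃ = iσ₁` for the alternating unipotent Stokes
matrices implies `s_k = i(1 + s_{k+2}s_{k+3})` for all `k`, where `s` is extended
`5`-periodically. -/
theorem RTHE_stokes_relations (s : ℤ → ℂ)
    (hper : ∀ k : ℤ, s (k + 5) = s k)
    (hcyc : !![(1:ℂ), 0; s (-1), 1] * !![(1:ℂ), s 0; 0, 1] * !![(1:ℂ), 0; s 1, 1]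
        * !![(1:ℂ), s 2; 0, 1] * !![(1:ℂ), 0; s 3, 1]
        = Complex.I • !![(0:ℂ), 1; 1, 0]) :
    ∀ k : ℤ, s k = Complex.I * (1 + s (k + 2) * s (k + 3)) := by
  intro k
  -- `hcyc` is, definitionally, the cyclic relation for the window starting at `k₀ = -1`.
  exact Stokes.eq_of_cyclicProduct_eq (Stokes.cyclicProduct_periodic hper (-1) hcyc k)
end

section
/- Let S₁,…,S₆ be 2×2 matrices with S₂ₖ₋₁ = [[1, s₂ₖ₋₁],[0,1]] and S₂ₖ = [[1,0],[s₂ₖ,1]], and suppose S₁S₂S₃S₄S₅S₆ = diag(e^{πi(2μ−1)}, e^{−πi(2μ−1)}). Then the Stokes multipliers satisfy: 1 + s₁s₂ + e^{2πiμ}(1 + s₄s₅) = 0, 1 + s₂s₃ + e^{−2πiμ}(1 + s₅s₆) = 0, and s₁ + s₃ + s₁s₂s₃ − e^{2πiμ}s₅ = 0. -/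
open Matrix Complex

/-- The cyclic condition `S₁⋯S₆ = diag(e^{πi(2μ−1)}, e^{−πi(2μ−1)})` for the
alternating unipotent Stokes matrices implies three algebraic relations among the
Stokes multipliers. -/
theorem THE_stokes_relations (s₁ s₂ s₃ s₄ s₅ s₆ μ : ℂ)
    (hcyc : !![(1:ℂ), s₁; 0, 1] * !![(1:ℂ), 0; s₂, 1] * !![(1:ℂ), s₃; 0, 1]
        * !![(1:ℂ), 0; s₄, 1] * !![(1:ℂ), s₅; 0, 1] * !![(1:ℂ), 0; s₆, 1]
        = !![Complex.exp (↑Real.pi * Complex.I * (2*μ - 1)), 0;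
             0, Complex.exp (-(↑Real.pi * Complex.I * (2*μ - 1)))]) :
    1 + s₁*s₂ + Complex.exp (2*↑Real.pi*Complex.I*μ) * (1 + s₄*s₅) = 0
    ∧ 1 + s₂*s₃ + Complex.exp (-(2*↑Real.pi*Complex.I*μ)) * (1 + s₅*s₆) = 0
    ∧ s₁ + s₃ + s₁*s₂*s₃ - Complex.exp (2*↑Real.pi*Complex.I*μ) * s₅ = 0 := by
  set E := Complex.exp (2*↑Real.pi*Complex.I*μ) with hE
  set F := Complex.exp (-(2*↑Real.pi*Complex.I*μ)) with hF
  have hinv : E * F = 1 := by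
    rw [hE, hF, ← Complex.exp_add]
    simp
  have hd : Complex.exp (↑Real.pi * Complex.I * (2*μ - 1)) = -E := by
    have : (↑Real.pi * Complex.I * (2*μ - 1)) = 2*↑Real.pi*Complex.I*μ + (-(↑Real.pi * Complex.I)) := by ring
    rw [this, Complex.exp_add, hE]
    rw [Complex.exp_neg, Complex.exp_pi_mul_I]
    ring
  have hd' : Complex.exp (-(↑Real.pi * Complex.I * (2*μ - 1))) = -F := by
    have : (-(↑Real.pi * Complex.I * (2*μ - 1))) = (-(2*↑Real.pi*Complex.I*μ)) + (↑Real.pi * Complex.I) := by ring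
    rw [this, Complex.exp_add, hF, Complex.exp_pi_mul_I]
    simp
  rw [hd, hd'] at hcyc
  have h00 := congrFun (congrFun hcyc 0) 0
  have h01 := congrFun (congrFun hcyc 0) 1
  have h10 := congrFun (congrFun hcyc 1) 0
  have h11 := congrFun (congrFun hcyc 1) 1
  simp [Matrix.mul_apply, Fin.sum_univ_two] at h00 h01 h10 h11
  refine ⟨?_, ?_, ?_⟩
  · linear_combination E*((1+s₁*s₂)*(1+s₃*s₄)+s₁*s₄)*h11 - E*(s₂+s₄+s₂*s₃*s₄)*h01
      - ((1+s₁*s₂)*(1+s₃*s₄)+s₁*s₄)*hinv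
      - s₄*((1+s₅*E*(s₂+s₄+s₂*s₃*s₄))*h01 - s₅*E*((1+s₁*s₂)*(1+s₃*s₄)+s₁*s₄)*h11
        + s₅*((1+s₁*s₂)*(1+s₃*s₄)+s₁*s₄)*hinv)
  · linear_combination -(1+s₂*s₃)*hinv + F*(1+s₂*s₃)*h00 - F*(s₁+s₃+s₁*s₂*s₃)*h10
  · linear_combination (1+s₅*E*(s₂+s₄+s₂*s₃*s₄))*h01
      - s₅*E*((1+s₁*s₂)*(1+s₃*s₄)+s₁*s₄)*h11
      + s₅*((1+s₁*s₂)*(1+s₃*s₄)+s₁*s₄)*hinv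
end

section
/- The formal Taylor series y(x) = ε(x−a) + b(x−a)² + (2aε/3)(x−a)³ with ε = ±2α satisfies the Painlevé XXXIV equation y'' = (y')²/(2y) + 4y² + 2xy − (2α)²/(2y) up to leading orders; precisely, 2y·y'' − (y')² − 8y³ − 4xy² + (2α)² = O((x−a)³) as x → a, for any parameter b. -/
open Filter Asymptotics Topology

/-!
Write `t = x - a` and `y = εt + bt² + ct³`. Since `y(a) = 0` and `y'(a) = ε`, the residual
`2yy'' − (y')² − 8y³ − 4xy² + κ` of Painlevé XXXIV is `(κ − ε²) + (6cε − 4aε²)t² + O(t³)`: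
the linear coefficient cancels identically. The choices `ε² = (2α)² = κ` and `c = 2aε/3`
kill the two remaining coefficients.
-/

section ShiftedCubic

variable {𝕜 : Type*} [NontriviallyNormedField 𝕜]

theorem hasDerivAt_shifted_cubic (a c₀ c₁ c₂ c₃ x : 𝕜) :
    HasDerivAt (fun x => c₀ + c₁ * (x - a) + c₂ * (x - a) ^ 2 + c₃ * (x - a) ^ 3)
      (c₁ + 2 * c₂ * (x - a) + 3 * c₃ * (x - a) ^ 2) x := by
  have ht : HasDerivAt (fun x : 𝕜 => x - a) 1 x := (hasDerivAt_id x).sub_const a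
  refine ((((ht.const_mul c₁).const_add c₀).add ((ht.pow 2).const_mul c₂)).add
    ((ht.pow 3).const_mul c₃)).congr_deriv ?_
  push_cast
  ring

theorem deriv_shifted_cubic (a c₀ c₁ c₂ c₃ : 𝕜) :
    deriv (fun x => c₀ + c₁ * (x - a) + c₂ * (x - a) ^ 2 + c₃ * (x - a) ^ 3) =
      fun x => c₁ + 2 * c₂ * (x - a) + 3 * c₃ * (x - a) ^ 2 :=
  funext fun x => (hasDerivAt_shifted_cubic a c₀ c₁ c₂ c₃ x).deriv

end ShiftedCubic

theorem isBigO_pow_sub_of_eq_mul {𝕜 : Type*} [NormedField 𝕜] {f g : 𝕜 → 𝕜} {a : 𝕜}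
    (n : ℕ) (hg : ContinuousAt g a) (hf : ∀ x, f x = (x - a) ^ n * g x) :
    f =O[𝓝 a] fun x => (x - a) ^ n := by
  simpa [funext hf] using (isBigO_refl (fun x => (x - a) ^ n) (𝓝 a)).mul (hg.isBigO_one 𝕜)

theorem pxxxiv_residual_shifted_cubic {𝕜 : Type*} [CommRing 𝕜] [TopologicalSpace 𝕜]
    [IsTopologicalRing 𝕜] (a ε b c κ : 𝕜) :
    ∃ R : 𝕜 → 𝕜, Continuous R ∧ ∀ x,
      2 * (ε * (x - a) + b * (x - a) ^ 2 + c * (x - a) ^ 3) * (2 * b + 6 * c * (x - a))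
        - (ε + 2 * b * (x - a) + 3 * c * (x - a) ^ 2) ^ 2
        - 8 * (ε * (x - a) + b * (x - a) ^ 2 + c * (x - a) ^ 3) ^ 3
        - 4 * x * (ε * (x - a) + b * (x - a) ^ 2 + c * (x - a) ^ 3) ^ 2 + κ
      = (κ - ε ^ 2) + (6 * c * ε - 4 * a * ε ^ 2) * (x - a) ^ 2 + (x - a) ^ 3 * R x := by
  set u : 𝕜 → 𝕜 := fun x => ε + b * (x - a) + c * (x - a) ^ 2 with hu
  refine ⟨fun x => 4 * b * c + 3 * c ^ 2 * (x - a) - 4 * a * (b + c * (x - a)) * (u x + ε)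
    - 8 * u x ^ 3 - 4 * u x ^ 2, by fun_prop, fun x => ?_⟩
  simp only [hu]
  ring

/-- The truncated Taylor expansion
`y(x) = ε(x−a) + b(x−a)² + (2aε/3)(x−a)³` with `ε = ±2α`
solves the Painlevé XXXIV equation (cleared of denominators) to leading orders:
`2y·y'' − (y')² − 8y³ − 4xy² + (2α)²` is `O((x−a)³)` as `x → a`. -/
theorem PXXXIV_taylor_formal (a b α ε : ℂ) (hε : ε = 2*α ∨ ε = -(2*α))
    (y : ℂ → ℂ)
    (hy : ∀ x, y x = ε * (x - a) + b * (x - a)^2 + 2*a*ε/3 * (x - a)^3) :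
    (fun x => 2 * y x * deriv (deriv y) x - (deriv y x)^2 - 8 * (y x)^3
        - 4 * x * (y x)^2 + (2*α)^2)
      =O[𝓝 a] fun x => (x - a)^3 := by
  have hε2 : ε ^ 2 = (2 * α) ^ 2 := by rcases hε with rfl | rfl <;> ring
  have hy₀ : y = fun x => 0 + ε * (x - a) + b * (x - a) ^ 2 + 2 * a * ε / 3 * (x - a) ^ 3 :=
    funext fun x => by rw [hy, zero_add]
  have hy₁ : deriv y =
      fun x => ε + 2 * b * (x - a) + 3 * (2 * a * ε / 3) * (x - a) ^ 2 + 0 * (x - a) ^ 3 := by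
    rw [hy₀, deriv_shifted_cubic]
    ext x
    ring
  have hy₂ : deriv (deriv y) =
      fun x => 2 * b + 2 * (3 * (2 * a * ε / 3)) * (x - a) + 3 * 0 * (x - a) ^ 2 := by
    rw [hy₁, deriv_shifted_cubic]
  obtain ⟨R, hR, hres⟩ := pxxxiv_residual_shifted_cubic a ε b (2 * a * ε / 3) ((2 * α) ^ 2)
  refine isBigO_pow_sub_of_eq_mul 3 hR.continuousAt fun x => ?_
  rw [hy₂, hy₁, hy x]
  linear_combination hres x - hε2
end

section
/- Suppose y solves the Painlevé I equation y'' = 6y² + x, v = y', and near x = a one has the Laurent data y(x) = (x−a)^{−2} − (a/10)(x−a)² − (1/6)(x−a)³ + b(x−a)⁴ + O((x−a)⁵). Define σ(x) = v(x)²/2 − 2y(x)³ − x·y(x). Then the limit lim_{x→a} 2(σ(x) − 1/(x−a)) exists and equals −28b. -/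
set_option maxHeartbeats 2000000


open Filter Asymptotics Topology

/-- If `y` solves Painlevé I near `a` with a double pole at `a` whose Laurent
expansion begins `(x−a)⁻² − (a/10)(x−a)² − (1/6)(x−a)³ + b(x−a)⁴ + O((x−a)⁵)`,
and `σ = (y')²/2 − 2y³ − xy`, then `2(σ(x) − 1/(x−a)) → −28b` as `x → a`. -/
theorem PI_accessory_parameter (a b : ℂ) (y : ℂ → ℂ)
    (hPI : ∀ᶠ x in 𝓝[≠] a, deriv (deriv y) x = 6 * (y x)^2 + x)
    (g : ℂ → ℂ) (hg : AnalyticAt ℂ g a)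
    (hLaurent : ∀ᶠ x in 𝓝[≠] a,
      y x = ((x - a)^2)⁻¹ - a/10 * (x - a)^2 - 1/6 * (x - a)^3
        + b * (x - a)^4 + (x - a)^5 * g x)
    (σ : ℂ → ℂ)
    (hσ : ∀ x, σ x = (deriv y x)^2 / 2 - 2 * (y x)^3 - x * y x) :
    Tendsto (fun x => 2 * (σ x - 1 / (x - a))) (𝓝[≠] a) (𝓝 (-28 * b)) := by
  set E : ℂ → ℂ := fun x => ((x - a)^2)⁻¹ - a/10 * (x - a)^2 - 1/6 * (x - a)^3
        + b * (x - a)^4 + (x - a)^5 * g x with hE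
  set Q : ℂ → ℂ := fun x => (-32:ℂ) * (g x) + (-4:ℂ) * (deriv g x) * (x-a) + ((3:ℂ)/25) * (a)^2 * (x-a) + ((1:ℂ)/3) * (a) * (x-a)^2 + ((-6:ℂ)/5) * (a) * (b) * (x-a)^3 + ((1:ℂ)/4) * (x-a)^3 + ((-8:ℂ)/5) * (a) * (g x) * (x-a)^4 + (-2:ℂ) * (b) * (x-a)^4 + ((-2:ℂ)/5) * (a) * (deriv g x) * (x-a)^5 + (-3:ℂ) * (g x) * (x-a)^5 + (4:ℂ) * (b)^2 * (x-a)^5 + ((1:ℂ)/250) * (a)^3 * (x-a)^5 + (-1:ℂ) * (deriv g x) * (x-a)^6 + (16:ℂ) * (b) * (g x) * (x-a)^6 + ((1:ℂ)/50) * (a)^2 * (x-a)^6 + (8:ℂ) * (b) * (deriv g x) * (x-a)^7 + (13:ℂ) * (g x)^2 * (x-a)^7 + ((-3:ℂ)/25) * (a)^2 * (b) * (x-a)^7 + ((1:ℂ)/30) * (a) * (x-a)^7 + (10:ℂ) * (g x) * (deriv g x) * (x-a)^8 + ((-3:ℂ)/25) * (a)^2 * (g x) * (x-a)^8 + ((-2:ℂ)/5)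 * (a) * (b) * (x-a)^8 + ((1:ℂ)/54) * (x-a)^8 + (1:ℂ) * (deriv g x)^2 * (x-a)^9 + ((-2:ℂ)/5) * (a) * (g x) * (x-a)^9 + ((6:ℂ)/5) * (a) * (b)^2 * (x-a)^9 + ((-1:ℂ)/3) * (b) * (x-a)^9 + ((12:ℂ)/5) * (a) * (b) * (g x) * (x-a)^10 + ((-1:ℂ)/3) * (g x) * (x-a)^10 + (2:ℂ) * (b)^2 * (x-a)^10 + ((6:ℂ)/5) * (a) * (g x)^2 * (x-a)^11 + (4:ℂ) * (b) * (g x) * (x-a)^11 + (-4:ℂ) * (b)^3 * (x-a)^11 + (2:ℂ) * (g x)^2 * (x-a)^12 + (-12:ℂ) * (b)^2 * (g x) * (x-a)^12 + (-12:ℂ) * (b) * (g x)^2 * (x-a)^13 + (-4:ℂ) * (g x)^3 * (x-a)^14 with hQ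
  -- g is differentiable near a, and deriv g is continuous at a
  have hganal : ∀ᶠ x in 𝓝 a, AnalyticAt ℂ g x := hg.eventually_analyticAt
  have hgc : ContinuousAt g a := hg.continuousAt
  have hdgc : ContinuousAt (deriv g) a := by
    obtain ⟨s, hs, hsa⟩ := hg.exists_mem_nhds_analyticOnNhd
    exact (hsa.deriv a (mem_of_mem_nhds hs)).continuousAt
  -- y agrees with E on a neighborhood of each point of a punctured nbhd of a
  have hL' : ∀ᶠ x in 𝓝 a, ∀ᶠ z in 𝓝 x, (z ≠ a → y z = E z) := by
    have h1 : ∀ᶠ x in 𝓝 a, (x ≠ a → y x = E x) :=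
      eventually_nhdsWithin_iff.mp hLaurent
    exact h1.eventually_nhds
  -- key eventual identity
  have key : ∀ᶠ x in 𝓝[≠] a, 2 * (σ x - 1 / (x - a)) = -28 * b + (x - a) * Q x := by
    filter_upwards [eventually_nhdsWithin_of_eventually_nhds hL',
      eventually_nhdsWithin_of_eventually_nhds hganal.eventually_nhds,
      self_mem_nhdsWithin] with x hyE hga (hx : x ≠ a)
    have ht : x - a ≠ 0 := sub_ne_zero.mpr hx
    -- y = E near x
    have hyEx : y =ᶠ[𝓝 x] E := by
      have hne : ∀ᶠ z in 𝓝 x, z ≠ a := isOpen_ne.eventually_mem hx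
      filter_upwards [hyE, hne] with z h1 h2 using h1 h2
    have hyx : y x = E x := hyEx.self_of_nhds
    -- derivative of E at x
    have hgx : DifferentiableAt ℂ g x := hga.self_of_nhds.differentiableAt
    have h1 : HasDerivAt (fun z : ℂ => z - a) 1 x := (hasDerivAt_id x).sub_const a
    have h2 : HasDerivAt (fun z : ℂ => (z - a)^2) (2 * (x - a) ^ 1 * 1) x := h1.pow 2
    have h3 : HasDerivAt (fun z : ℂ => ((z - a)^2)⁻¹)
        (-(2 * (x - a) ^ 1 * 1) / ((x - a)^2)^2) x := h2.inv (pow_ne_zero _ ht)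
    have h4 : HasDerivAt (fun z : ℂ => (z - a)^3) (3 * (x - a) ^ 2 * 1) x := h1.pow 3
    have h5 : HasDerivAt (fun z : ℂ => (z - a)^4) (4 * (x - a) ^ 3 * 1) x := h1.pow 4
    have h6 : HasDerivAt (fun z : ℂ => (z - a)^5) (5 * (x - a) ^ 4 * 1) x := h1.pow 5
    have hD : HasDerivAt E
        (-(2 * (x - a) ^ 1 * 1) / ((x - a)^2)^2
          - (a/10) * (2 * (x - a) ^ 1 * 1) - (1/6) * (3 * (x - a) ^ 2 * 1)
          + b * (4 * (x - a) ^ 3 * 1)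
          + ((5 * (x - a) ^ 4 * 1) * g x + (x - a)^5 * deriv g x)) x := by
      exact ((((h3.sub (h2.const_mul (a/10))).sub (h4.const_mul (1/6))).add
        (h5.const_mul b)).add (h6.mul hgx.hasDerivAt))
    have hdy : deriv y x = -(2 * (x - a) ^ 1 * 1) / ((x - a)^2)^2
          - (a/10) * (2 * (x - a) ^ 1 * 1) - (1/6) * (3 * (x - a) ^ 2 * 1)
          + b * (4 * (x - a) ^ 3 * 1)
          + ((5 * (x - a) ^ 4 * 1) * g x + (x - a)^5 * deriv g x) := by
      rw [hyEx.deriv_eq]; exact hD.deriv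
    rw [hσ, hdy, hyx, hE, hQ]
    simp only [div_eq_mul_inv, one_div, ← inv_pow]
    set u := (x - a)⁻¹ with hudef
    have hu : (x - a) * u = 1 := mul_inv_cancel₀ ht
    linear_combination ((2:ℂ) * u + (4:ℂ) * u^6 + (4:ℂ) * (x-a) * u^2 + (4:ℂ) * (x-a) * u^7 + (4:ℂ) * (x-a)^2 * u^3 + ((-1:ℂ)/3) * (x-a)^4 + ((-1:ℂ)/3) * (x-a)^5 * u + (-4:ℂ) * deriv g x * (x-a)^2 + (-4:ℂ) * deriv g x * (x-a)^3 * u + (-4:ℂ) * deriv g x * (x-a)^4 * u^2 + (-4:ℂ) * deriv g x * (x-a)^5 * u^3 + (-32:ℂ) * g x * (x-a) + (-32:ℂ) * g x * (x-a)^2 * u + (-32:ℂ) * g x * (x-a)^3 * u^2 + (-32:ℂ) * g x * (x-a)^4 * u^3 + (4:ℂ) * g x * (x-a)^6 + (4:ℂ) * g x * (x-a)^7 * u + (-12:ℂ) * g x^2 * (x-a)^8 + (-12:ℂ) * g x^2 * (x-a)^9 * u + (-28:ℂ) * b + (-28:ℂ) * b * (x-a) * u + (-28:ℂ) * b * (x-a)^2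 * u^2 + (-28:ℂ) * b * (x-a)^3 * u^3 + (4:ℂ) * b * (x-a)^5 + (4:ℂ) * b * (x-a)^6 * u + (-24:ℂ) * b * g x * (x-a)^7 + (-24:ℂ) * b * g x * (x-a)^8 * u + (-12:ℂ) * b^2 * (x-a)^6 + (-12:ℂ) * b^2 * (x-a)^7 * u + (2:ℂ) * a * u^2 + (2:ℂ) * a * (x-a) * u^3 + ((-2:ℂ)/5) * a * (x-a)^3 + ((-2:ℂ)/5) * a * (x-a)^4 * u + ((12:ℂ)/5) * a * g x * (x-a)^5 + ((12:ℂ)/5) * a * g x * (x-a)^6 * u + ((12:ℂ)/5) * a * b * (x-a)^4 + ((12:ℂ)/5) * a * b * (x-a)^5 * u + ((-3:ℂ)/25) * a^2 * (x-a)^2 + ((-3:ℂ)/25) * a^2 * (x-a)^3 * u) * hu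
  -- the limit of the RHS
  have hlim : Tendsto (fun x => -28 * b + (x - a) * Q x) (𝓝[≠] a) (𝓝 (-28 * b)) := by
    have hQc : ContinuousAt Q a := by
      rw [hQ]
      fun_prop
    have h0 : Tendsto (fun x : ℂ => (x - a) * Q x) (𝓝 a) (𝓝 0) := by
      have : Tendsto (fun x : ℂ => (x - a) * Q x) (𝓝 a) (𝓝 ((a - a) * Q a)) :=
        (continuousAt_id.sub continuousAt_const).mul hQc
      simpa using this
    have := (tendsto_const_nhds (x := (-28 : ℂ) * b)).add h0
    simp only [add_zero] at this
    exact tendsto_nhdsWithin_of_tendsto_nhds this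
  exact hlim.congr' (EventuallyEq.symm key)
end

section
/- Define A(z,x) = [[z² + v + x/2, u(z−y)],[−(2/u)(vz + vy + 1/2 − μ), −z² − v − x/2]] and B(z,x) = [[z/2, u/2],[−v/u, −z/2]], where y, v, u are differentiable functions of x with u nowhere zero. Then the zero-curvature equation ∂A/∂x − ∂B/∂z + AB − BA = 0 holds identically in z if and only if y' = y² + v + x/2, v' = −2yv − 1/2 + μ, and u' = −uy. In particular these equations imply y'' = 2y³ + xy + μ (Painlevé II). -/
/-!
Write `Ey = y' - (y² + v + x/2)`, `Ev = v' - (-2yv - 1/2 + μ)` and `Eu = u' + uy` for the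
residuals of the three equations. A direct computation expresses the zero-curvature matrix
through them, with entries of degree at most one in `z`:
`[[Ev, Eu (z - y) - u Ey], [(2/u) ((Eu/u) (vz + vy + 1/2 - μ) - (z + y) Ev - v Ey), -Ev]]`.
So it vanishes when the residuals do; conversely, the diagonal gives `Ev = 0`, and the upper right
entry at `z = y` and `z = y + 1` gives `u Ey = 0` and then `Eu = 0`. Differentiating
`y' = y² + v + x/2` once more and substituting `v'` yields Painlevé II.
-/

open Matrix

theorem Matrix.of_deriv_fin_two {𝕜 : Type*} [NontriviallyNormedField 𝕜]
    {M : 𝕜 → Matrix (Fin 2) (Fin 2) 𝕜} {a b c d x : 𝕜}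
    (ha : HasDerivAt (fun t => M t 0 0) a x) (hb : HasDerivAt (fun t => M t 0 1) b x)
    (hc : HasDerivAt (fun t => M t 1 0) c x) (hd : HasDerivAt (fun t => M t 1 1) d x) :
    (of fun i j => deriv (fun t => M t i j) x) = !![a, b; c, d] := by
  ext i j
  fin_cases i <;> fin_cases j
  · exact ha.deriv
  · exact hb.deriv
  · exact hc.deriv
  · exact hd.deriv

theorem Matrix.fin_two_eq_zero_iff {α : Type*} [Zero α] {a b c d : α} :
    !![a, b; c, d] = 0 ↔ a = 0 ∧ b = 0 ∧ c = 0 ∧ d = 0 := by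
  rw [← Matrix.ext_iff]
  simp [Fin.forall_fin_two]
  tauto

noncomputable def zeroCurvature {𝕜 n : Type*} [NontriviallyNormedField 𝕜] [Fintype n]
    (A B : 𝕜 → 𝕜 → Matrix n n 𝕜) (z x : 𝕜) : Matrix n n 𝕜 :=
  (of fun i j => deriv (fun t => A z t i j) x) - (of fun i j => deriv (fun t => B t x i j) z)
    + A z x * B z x - B z x * A z x

namespace PainleveII

variable (y v u : ℂ → ℂ) (μ : ℂ)

noncomputable def laxA (z x : ℂ) : Matrix (Fin 2) (Fin 2) ℂ :=
  !![z^2 + v x + x/2, u x * (z - y x);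
    -(2 / u x) * (v x * z + v x * y x + 1/2 - μ), -(z^2) - v x - x/2]

noncomputable def laxB (z x : ℂ) : Matrix (Fin 2) (Fin 2) ℂ :=
  !![z/2, u x / 2; -(v x) / u x, -(z/2)]

variable {y v u μ}

theorem zeroCurvature_laxA_laxB {x : ℂ} (hy : DifferentiableAt ℂ y x)
    (hv : DifferentiableAt ℂ v x) (hu : DifferentiableAt ℂ u x) (hu0 : u x ≠ 0) (z : ℂ) :
    let Ey := deriv y x - (y x ^ 2 + v x + x / 2)
    let Ev := deriv v x - (-2 * y x * v x - 1/2 + μ)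
    let Eu := deriv u x + u x * y x
    zeroCurvature (laxA y v u μ) (laxB v u) z x =
      !![Ev, Eu * (z - y x) - u x * Ey;
        2 / u x * (Eu / u x * (v x * z + v x * y x + 1/2 - μ) - (z + y x) * Ev - v x * Ey),
        -Ev] := by
  intro Ey Ev Eu
  have dA := Matrix.of_deriv_fin_two (M := laxA y v u μ z)
    (((hasDerivAt_const x (z ^ 2)).add hv.hasDerivAt).add ((hasDerivAt_id x).div_const 2))
    (hu.hasDerivAt.mul ((hasDerivAt_const x z).sub hy.hasDerivAt))
    (((hasDerivAt_const x 2).div hu.hasDerivAt hu0).neg.mul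
      ((((hv.hasDerivAt.mul_const z).add (hv.hasDerivAt.mul hy.hasDerivAt)).add_const
        (1/2)).sub_const μ))
    (((hasDerivAt_const x (-(z ^ 2))).sub hv.hasDerivAt).sub ((hasDerivAt_id x).div_const 2))
  have dB := Matrix.of_deriv_fin_two (M := fun t => laxB v u t x) ((hasDerivAt_id z).div_const 2)
    (hasDerivAt_const z (u x / 2)) (hasDerivAt_const z (-(v x) / u x))
    ((hasDerivAt_id z).div_const 2).neg
  rw [zeroCurvature, dA, dB, laxA, laxB]
  ext i j
  fin_cases i <;> fin_cases j <;> simp [Ey, Ev, Eu] <;> field_simp <;> ring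

theorem zeroCurvature_laxA_laxB_eq_zero_iff {x : ℂ} (hy : DifferentiableAt ℂ y x)
    (hv : DifferentiableAt ℂ v x) (hu : DifferentiableAt ℂ u x) (hu0 : u x ≠ 0) :
    (∀ z, zeroCurvature (laxA y v u μ) (laxB v u) z x = 0) ↔
      deriv y x = y x ^ 2 + v x + x / 2 ∧ deriv v x = -2 * y x * v x - 1/2 + μ ∧
        deriv u x = -u x * y x := by
  simp only [zeroCurvature_laxA_laxB hy hv hu hu0, Matrix.fin_two_eq_zero_iff]
  constructor
  · intro h
    obtain ⟨hEv, hEy, -, -⟩ := h (y x)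
    obtain ⟨-, hEu, -, -⟩ := h (y x + 1)
    have hy' : deriv y x = y x ^ 2 + v x + x / 2 := by
      rw [sub_self, mul_zero, zero_sub, neg_eq_zero, mul_eq_zero] at hEy
      exact sub_eq_zero.mp (hEy.resolve_left hu0)
    refine ⟨hy', sub_eq_zero.mp hEv, ?_⟩
    rw [hy'] at hEu
    linear_combination hEu
  · rintro ⟨hy', hv', hu'⟩ z
    simp [hy', hv', hu']

theorem deriv_deriv_eq_painleveII (hy : Differentiable ℂ y) (hv : Differentiable ℂ v)
    (hyv : ∀ x, deriv y x = y x ^ 2 + v x + x / 2 ∧ deriv v x = -2 * y x * v x - 1/2 + μ)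
    (x : ℂ) : deriv (deriv y) x = 2 * y x ^ 3 + x * y x + μ := by
  have hy' : deriv y = fun t => y t ^ 2 + v t + t / 2 := funext fun t => (hyv t).1
  have hy'' : HasDerivAt (fun t => y t ^ 2 + v t + t / 2) _ x :=
    (((hy x).hasDerivAt.pow 2).add (hv x).hasDerivAt).add ((hasDerivAt_id x).div_const 2)
  rw [hy', hy''.deriv]
  obtain ⟨h1, h2⟩ := hyv x
  linear_combination 2 * y x * h1 + h2

end PainleveII

/-- The zero-curvature equation for the Painlevé II Lax pair holds identically in the
spectral variable `z` iff `y' = y² + v + x/2`, `v' = −2yv − 1/2 + μ`, `u' = −uy`;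
in particular these equations imply Painlevé II `y'' = 2y³ + xy + μ`. -/
theorem PII_zero_curvature
    (y v u : ℂ → ℂ) (μ : ℂ)
    (hy : Differentiable ℂ y) (hv : Differentiable ℂ v) (hu : Differentiable ℂ u)
    (hu0 : ∀ x, u x ≠ 0)
    (A B : ℂ → ℂ → Matrix (Fin 2) (Fin 2) ℂ)
    (hA : ∀ z x, A z x = !![z^2 + v x + x/2, u x * (z - y x);
        -(2 / u x) * (v x * z + v x * y x + 1/2 - μ), -(z^2) - v x - x/2])
    (hB : ∀ z x, B z x = !![z/2, u x / 2; -(v x) / u x, -(z/2)]) :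
    ((∀ z x, (Matrix.of fun i j => deriv (fun t => A z t i j) x)
        - (Matrix.of fun i j => deriv (fun t => B t x i j) z)
        + A z x * B z x - B z x * A z x = 0)
      ↔ (∀ x, deriv y x = (y x)^2 + v x + x/2
          ∧ deriv v x = -2 * y x * v x - 1/2 + μ
          ∧ deriv u x = -(u x) * y x))
    ∧ ((∀ x, deriv y x = (y x)^2 + v x + x/2
          ∧ deriv v x = -2 * y x * v x - 1/2 + μ
          ∧ deriv u x = -(u x) * y x)
      → ∀ x, deriv (deriv y) x = 2 * (y x)^3 + x * y x + μ) := by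
  obtain rfl : A = PainleveII.laxA y v u μ := funext fun z => funext (hA z)
  obtain rfl : B = PainleveII.laxB v u := funext fun z => funext (hB z)
  refine ⟨?_, fun h =>
    PainleveII.deriv_deriv_eq_painleveII hy hv fun x => ⟨(h x).1, (h x).2.1⟩⟩
  change (∀ z x, zeroCurvature (PainleveII.laxA y v u μ) (PainleveII.laxB v u) z x = 0) ↔ _
  rw [forall_comm]
  exact forall_congr' fun x =>
    PainleveII.zeroCurvature_laxA_laxB_eq_zero_iff (hy x) (hv x) (hu x) (hu0 x)
end

section
/- Suppose y solves the Painlevé XXXIV equation y'' = (y')²/(2y) + 4y² + 2xy − (2α)²/(2y) on an interval where y is nonvanishing, and define v = (y' − 2α)/(2y). Then the function w(x) = −2^{−1/3} v(−2^{−1/3} x) satisfies the Painlevé II equation w'' = 2w³ + xw + μ with parameter μ = −(2α + 1/2). -/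
/-!
With `v = (y' - 2α) / (2y)`, Painlevé XXXIV for `y` becomes the first-order system
`v' = -v² + x + 2y`, `y' = 2yv + 2α`. Differentiating the first equation and substituting the
second eliminates `y` and leaves `v'' = 2v³ - 2xv + (4α + 1)`. The substitution
`w(x) = c v(cx)` multiplies second derivatives by `c³`, and `c = -2^(-1/3)` has `c³ = -1/2`,
which turns this into Painlevé II with `μ = -(2α + 1/2)`.
-/

section

variable {𝕜 : Type*} [NontriviallyNormedField 𝕜]

theorem deriv_const_mul_comp_mul (a c : 𝕜) (u : 𝕜 → 𝕜) :
    deriv (fun t => a * u (c * t)) = fun t => a * c * deriv u (c * t) := by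
  ext t
  simp only [deriv_const_mul_field', deriv_comp_mul_left, smul_eq_mul, mul_assoc]

theorem deriv_deriv_const_mul_comp_mul (c x : 𝕜) (v : 𝕜 → 𝕜) :
    deriv (deriv fun t => c * v (c * t)) x = c ^ 3 * deriv (deriv v) (c * x) := by
  rw [deriv_const_mul_comp_mul, deriv_const_mul_comp_mul]
  ring

theorem hasDerivAt_riccati_of_painleveXXXIV [CharZero 𝕜] {α t : 𝕜} {y : 𝕜 → 𝕜}
    (hy : DifferentiableAt 𝕜 y t) (hy' : DifferentiableAt 𝕜 (deriv y) t) (hy0 : y t ≠ 0)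
    (hP34 : deriv (deriv y) t
        = (deriv y t) ^ 2 / (2 * y t) + 4 * (y t) ^ 2 + 2 * t * y t - (2 * α) ^ 2 / (2 * y t)) :
    HasDerivAt (fun s => (deriv y s - 2 * α) / (2 * y s))
      (-((deriv y t - 2 * α) / (2 * y t)) ^ 2 + t + 2 * y t) t := by
  have hquot := (hy'.hasDerivAt.sub_const (2 * α)).div (hy.hasDerivAt.const_mul 2)
    (mul_ne_zero two_ne_zero hy0)
  refine hquot.congr_deriv ?_
  rw [hP34]
  field_simp
  ring

theorem hasDerivAt_painleveII_of_riccati_system {α t : 𝕜} {v y : 𝕜 → 𝕜}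
    (hv : HasDerivAt v (-(v t) ^ 2 + t + 2 * y t) t)
    (hy : HasDerivAt y (2 * y t * v t + 2 * α) t) :
    HasDerivAt (fun s => -(v s) ^ 2 + s + 2 * y s)
      (2 * (v t) ^ 3 - 2 * t * v t + (4 * α + 1)) t := by
  have h := ((hv.pow 2).neg.add (hasDerivAt_id t)).add (hy.const_mul 2)
  refine h.congr_deriv ?_
  ring

end

theorem Complex.cpow_neg_one_div_three_pow_three (x : ℂ) :
    (x ^ (-(1 : ℂ) / 3)) ^ 3 = x⁻¹ := by
  rw [neg_div, one_div, Complex.cpow_neg, inv_pow, Complex.cpow_ofNat_inv_pow]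

/-- If `y` solves Painlevé XXXIV with parameter `α` and is nowhere vanishing, and
`v = (y' − 2α)/(2y)`, then `w(x) = −2^{−1/3} v(−2^{−1/3} x)` solves Painlevé II
with parameter `μ = −(2α + 1/2)`. -/
theorem PXXXIV_to_PII (α : ℂ) (y : ℂ → ℂ)
    (hy : Differentiable ℂ y) (hy' : Differentiable ℂ (deriv y))
    (hy0 : ∀ x, y x ≠ 0)
    (hP34 : ∀ x, deriv (deriv y) x
        = (deriv y x)^2 / (2 * y x) + 4 * (y x)^2 + 2 * x * y x
          - (2*α)^2 / (2 * y x))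
    (v w : ℂ → ℂ)
    (hv : ∀ x, v x = (deriv y x - 2*α) / (2 * y x))
    (hw : ∀ x, w x = -(2:ℂ)^(-(1:ℂ)/3) * v (-(2:ℂ)^(-(1:ℂ)/3) * x)) :
    ∀ x, deriv (deriv w) x = 2 * (w x)^3 + x * w x + (-(2*α + 1/2)) := by
  set c : ℂ := -(2:ℂ)^(-(1:ℂ)/3)
  have hc3 : c ^ 3 = -(1 / 2) := by
    rw [neg_pow, Complex.cpow_neg_one_div_three_pow_three]
    norm_num
  have hv' : ∀ t, HasDerivAt v (-(v t) ^ 2 + t + 2 * y t) t := by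
    rw [funext hv]
    exact fun t => hasDerivAt_riccati_of_painleveXXXIV (hy t) (hy' t) (hy0 t) (hP34 t)
  have hy_sys : ∀ t, HasDerivAt y (2 * y t * v t + 2 * α) t := fun t =>
    (hy t).hasDerivAt.congr_deriv (by rw [hv]; field_simp [hy0 t]; ring)
  have hv'' : ∀ t, deriv (deriv v) t = 2 * (v t) ^ 3 - 2 * t * v t + (4 * α + 1) := by
    intro t
    rw [funext fun s => (hv' s).deriv]
    exact (hasDerivAt_painleveII_of_riccati_system (hv' t) (hy_sys t)).deriv
  intro x
  rw [funext hw, deriv_deriv_const_mul_comp_mul, hv'']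
  dsimp only
  linear_combination (4 * α + 1 - 2 * c * x * v (c * x)) * hc3
end
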